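/- arXiv:math/0312375 — 5 statements merged into one kernel-verified Lean document; each statement's English description precedes it below -/
import Mathlib

section
/- Let g, h ∈ C[X,Y] be linearly independent homogeneous binary forms of degree d. Then the set of (λ:μ) ∈ P^1 such that λ g^2 + μ h^2 is a square of a degree-d form has cardinality at most 3. Equivalently, the image of the quadratic Veronese map q : P_d → P_{2d}, sending a degree-d binary form to its square (up to scalar), contains no four collinear points. -/
/-!
After dividing out `gcd g h` we may assume `g` and `h` coprime of degree `m ≥ 1`. Suppose
`λᵢ g² + μᵢ h² = φᵢ²` for two non-proportional pairs with all `λᵢ, μᵢ ≠ 0`. Differentiating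
shows that each `φᵢ` divides the Wronskian `W = g ∂h - h ∂g`, which is nonzero for a suitable
variable, and the `φᵢ` are coprime because `g` and `h` are. Hence `φ₁ φ₂`, of degree `2m`,
divides `W`, of degree `< 2m`. So apart from `[g²]` and `[h²]` the line meets the image of the
Veronese map in at most one point.
-/

open MvPolynomial

theorem IsRelPrime.dvd_of_dvd_mul_of_dvd_mul {α : Type*} [CommMonoidWithZero α] [GCDMonoid α]
    {a b c x : α} (hab : IsRelPrime a b) (ha : x ∣ a * c) (hb : x ∣ b * c) : x ∣ c :=
  (gcd_isUnit_iff_isRelPrime.2 hab).dvd_mul_left.1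
    ((dvd_gcd ha hb).trans (gcd_mul_right' c a b).dvd)

theorem Prod.exists_eq_smul_of_mul_eq_mul {K : Type*} [Field K] {c c₀ : K × K} (h₀ : c₀.1 ≠ 0)
    (h : c.1 * c₀.2 = c₀.1 * c.2) : ∃ t : K, c = t • c₀ := by
  refine ⟨c.1 / c₀.1, Prod.ext ?_ ?_⟩
  · simp [h₀]
  · simp only [Prod.smul_snd, smul_eq_mul]
    field_simp
    linear_combination -h

namespace MvPolynomial

variable {σ R K : Type*}

theorem totalDegree_pderiv_lt [CommSemiring R] {f : MvPolynomial σ R} {i : σ}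
    (h : pderiv i f ≠ 0) : (pderiv i f).totalDegree < f.totalDegree := by
  obtain ⟨m, hm, hm_deg⟩ := Finset.exists_mem_eq_sup _ (support_nonempty.2 h)
    fun s : σ →₀ ℕ => s.sum fun _ e => e
  have hcoeff : m + Finsupp.single i 1 ∈ f.support := by
    rw [mem_support_iff, coeff_pderiv] at hm
    exact mem_support_iff.2 (left_ne_zero_of_mul hm)
  have := le_totalDegree hcoeff
  rw [Finsupp.sum_add_index' (fun _ => rfl) (fun _ _ _ => rfl),
    Finsupp.sum_single_index rfl] at this
  rw [totalDegree, hm_deg]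
  omega

theorem exists_pderiv_ne_zero [CommSemiring R] [NoZeroDivisors R] [CharZero R]
    {f : MvPolynomial σ R} (hf : f.totalDegree ≠ 0) : ∃ i, pderiv i f ≠ 0 := by
  have hf0 : f ≠ 0 := by rintro rfl; simp at hf
  obtain ⟨m, hm, hm_deg⟩ := Finset.exists_mem_eq_sup _ (support_nonempty.2 hf0)
    fun s : σ →₀ ℕ => s.sum fun _ e => e
  obtain ⟨i, hi⟩ : ∃ i, m i ≠ 0 := by
    by_contra! h0
    exact hf (by rw [totalDegree, hm_deg, Finsupp.sum]; exact Finset.sum_eq_zero fun i _ => h0 i)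
  refine ⟨i, fun h0 => ?_⟩
  have := congrArg (coeff (m - Finsupp.single i 1)) h0
  rw [coeff_pderiv, tsub_add_cancel_of_le (Finsupp.single_le_iff.2 (Nat.one_le_iff_ne_zero.2 hi)),
    coeff_zero] at this
  exact mul_ne_zero (mem_support_iff.1 hm) (Nat.cast_add_one_ne_zero _) this

noncomputable def wronskian [CommRing R] (i : σ) (g h : MvPolynomial σ R) : MvPolynomial σ R :=
  g * pderiv i h - h * pderiv i g

theorem totalDegree_wronskian_lt [CommRing R] {i : σ} {g h : MvPolynomial σ R}
    (hW : wronskian i g h ≠ 0) : (wronskian i g h).totalDegree < g.totalDegree + h.totalDegree := by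
  have hterm : ∀ u v : MvPolynomial σ R, u * pderiv i v = 0 ∨
      (u * pderiv i v).totalDegree < u.totalDegree + v.totalDegree := by
    intro u v
    by_cases hv : pderiv i v = 0
    · exact .inl (by rw [hv, mul_zero])
    · exact .inr ((totalDegree_mul _ _).trans_lt (by have := totalDegree_pderiv_lt hv; omega))
  have hsub := totalDegree_sub (g * pderiv i h) (h * pderiv i g)
  rw [wronskian] at hW ⊢
  rcases hterm g h with h₁ | h₁ <;> rcases hterm h g with h₂ | h₂
  · simp [h₁, h₂] at hW
  · rw [h₁, zero_sub, totalDegree_neg]; omega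
  · rw [h₂, sub_zero]; exact h₁
  · omega

section Field

variable [Field K] {g h φ φ₁ φ₂ : MvPolynomial σ K} {a b a₁ b₁ a₂ b₂ : K}

theorem exists_wronskian_ne_zero [CharZero K] (hgh : IsRelPrime g h) (hg : g.totalDegree ≠ 0) :
    ∃ i, wronskian i g h ≠ 0 := by
  obtain ⟨i, hi⟩ := exists_pderiv_ne_zero hg
  refine ⟨i, fun hW => ?_⟩
  have hdvd : g ∣ pderiv i g := hgh.dvd_of_dvd_mul_left ⟨pderiv i h, (sub_eq_zero.1 hW).symm⟩
  exact (totalDegree_le_of_dvd_of_isDomain hdvd hi).not_gt (totalDegree_pderiv_lt hi)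

theorem dvd_wronskian_of_sq_eq [NeZero (2 : K)] (hgh : IsRelPrime g h) (ha : a ≠ 0) (hb : b ≠ 0)
    (e : a • g ^ 2 + b • h ^ 2 = φ ^ 2) (i : σ) : φ ∣ wronskian i g h := by
  let := UniqueFactorizationMonoid.toGCDMonoid (MvPolynomial σ K)
  rw [smul_eq_C_mul, smul_eq_C_mul] at e
  have hsq : ∀ u : MvPolynomial σ K, pderiv i (u ^ 2) = 2 * (u * pderiv i u) := fun u => by
    rw [pow_two, Derivation.leibniz, smul_eq_mul]; ring
  have e_deriv :
      C a * (2 * (g * pderiv i g)) + C b * (2 * (h * pderiv i h)) = 2 * (φ * pderiv i φ) := by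
    rw [← hsq, ← hsq, ← hsq, ← pderiv_C_mul, ← pderiv_C_mul, ← map_add, e]
  have hg : φ ∣ C (2 * a) * (g * wronskian i g h) :=
    ⟨2 * (φ * pderiv i h - h * pderiv i φ), by
      rw [wronskian, map_mul, map_ofNat]; linear_combination (2 * pderiv i h) * e - h * e_deriv⟩
  have hh : φ ∣ C (2 * b) * (h * wronskian i g h) :=
    ⟨-2 * (φ * pderiv i g - g * pderiv i φ), by
      rw [wronskian, map_mul, map_ofNat]; linear_combination (-2 * pderiv i g) * e + g * e_deriv⟩
  have hunit : ∀ {c : K}, c ≠ 0 → IsUnit (C (2 * c) : MvPolynomial σ K) := fun hc =>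
    (isUnit_iff_ne_zero.2 (mul_ne_zero two_ne_zero hc)).map C
  exact hgh.dvd_of_dvd_mul_of_dvd_mul ((hunit ha).dvd_mul_left.1 hg) ((hunit hb).dvd_mul_left.1 hh)

theorem isRelPrime_of_sq_eq (hgh : IsRelPrime g h) (hdet : a₁ * b₂ ≠ a₂ * b₁)
    (e₁ : a₁ • g ^ 2 + b₁ • h ^ 2 = φ₁ ^ 2) (e₂ : a₂ • g ^ 2 + b₂ • h ^ 2 = φ₂ ^ 2) :
    IsRelPrime φ₁ φ₂ := by
  rw [smul_eq_C_mul, smul_eq_C_mul] at e₁ e₂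
  have hunit : IsUnit (C (a₁ * b₂ - a₂ * b₁) : MvPolynomial σ K) :=
    (isUnit_iff_ne_zero.2 (sub_ne_zero.2 hdet)).map C
  intro q hq₁ hq₂
  replace hq₁ : q ∣ φ₁ ^ 2 := dvd_pow hq₁ two_ne_zero
  replace hq₂ : q ∣ φ₂ ^ 2 := dvd_pow hq₂ two_ne_zero
  have hqg : q ∣ g ^ 2 := by
    refine hunit.dvd_mul_left.1 ?_
    have : C (a₁ * b₂ - a₂ * b₁) * g ^ 2 = C b₂ * φ₁ ^ 2 - C b₁ * φ₂ ^ 2 := by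
      rw [map_sub, map_mul, map_mul]; linear_combination C b₂ * e₁ - C b₁ * e₂
    rw [this]
    exact dvd_sub (dvd_mul_of_dvd_right hq₁ _) (dvd_mul_of_dvd_right hq₂ _)
  have hqh : q ∣ h ^ 2 := by
    refine hunit.dvd_mul_left.1 ?_
    have : C (a₁ * b₂ - a₂ * b₁) * h ^ 2 = C a₁ * φ₂ ^ 2 - C a₂ * φ₁ ^ 2 := by
      rw [map_sub, map_mul, map_mul]; linear_combination C a₁ * e₂ - C a₂ * e₁
    rw [this]
    exact dvd_sub (dvd_mul_of_dvd_right hq₂ _) (dvd_mul_of_dvd_right hq₁ _)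
  exact hgh.pow hqg hqh

theorem ne_zero_of_sq_eq (hgh : IsRelPrime g h) (hg : g.totalDegree ≠ 0) (hb : b ≠ 0)
    (e : a • g ^ 2 + b • h ^ 2 = φ ^ 2) : φ ≠ 0 := by
  rintro rfl
  rw [smul_eq_C_mul, smul_eq_C_mul] at e
  have hdvd : g ∣ C b * h ^ 2 := ⟨-(C a * g), by linear_combination e⟩
  have hunit : IsUnit g :=
    (hgh.pow_right (n := 2)).isUnit_of_dvd (((isUnit_iff_ne_zero.2 hb).map C).dvd_mul_left.1 hdvd)
  have := totalDegree_le_of_dvd_of_isDomain hunit.dvd one_ne_zero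
  rw [totalDegree_one] at this
  omega

theorem mul_eq_mul_of_isRelPrime_of_sq_eq [CharZero K] (hgh : IsRelPrime g h)
    (hg : g.totalDegree ≠ 0) (hφ₁ : φ₁ ≠ 0) (hφ₂ : φ₂ ≠ 0)
    (hdeg : g.totalDegree + h.totalDegree ≤ φ₁.totalDegree + φ₂.totalDegree)
    (ha₁ : a₁ ≠ 0) (hb₁ : b₁ ≠ 0) (ha₂ : a₂ ≠ 0) (hb₂ : b₂ ≠ 0)
    (e₁ : a₁ • g ^ 2 + b₁ • h ^ 2 = φ₁ ^ 2) (e₂ : a₂ • g ^ 2 + b₂ • h ^ 2 = φ₂ ^ 2) :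
    a₁ * b₂ = a₂ * b₁ := by
  by_contra hdet
  obtain ⟨i, hW⟩ := exists_wronskian_ne_zero hgh hg
  have hdvd : φ₁ * φ₂ ∣ wronskian i g h := (isRelPrime_of_sq_eq hgh hdet e₁ e₂).mul_dvd
    (dvd_wronskian_of_sq_eq hgh ha₁ hb₁ e₁ i) (dvd_wronskian_of_sq_eq hgh ha₂ hb₂ e₂ i)
  have hle := totalDegree_le_of_dvd_of_isDomain hdvd hW
  rw [totalDegree_mul_of_isDomain hφ₁ hφ₂] at hle
  have hlt := totalDegree_wronskian_lt hW
  omega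

theorem exists_eq_mul_of_sq_eq_of_common_factor {p f : MvPolynomial σ K} (hp : p ≠ 0)
    (e : a • (p * g) ^ 2 + b • (p * h) ^ 2 = f ^ 2) :
    ∃ φ, f = p * φ ∧ a • g ^ 2 + b • h ^ 2 = φ ^ 2 := by
  simp only [smul_eq_C_mul] at e ⊢
  have hdvd : p ^ 2 ∣ f ^ 2 := ⟨C a * g ^ 2 + C b * h ^ 2, by rw [← e]; ring⟩
  obtain ⟨φ, rfl⟩ := (IsIntegrallyClosed.pow_dvd_pow_iff two_ne_zero).1 hdvd
  exact ⟨φ, rfl, mul_left_cancel₀ (pow_ne_zero 2 hp) (by linear_combination e)⟩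

theorem totalDegree_ne_zero_of_linearIndependent {p : MvPolynomial σ K}
    (hind : LinearIndependent K ![p * g, p * h]) (hdeg : g.totalDegree = h.totalDegree) :
    g.totalDegree ≠ 0 := by
  intro hg
  obtain ⟨x, rfl⟩ : ∃ x, g = C x := ⟨_, totalDegree_eq_zero_iff_eq_C.1 hg⟩
  obtain ⟨y, rfl⟩ : ∃ y, h = C y := ⟨_, totalDegree_eq_zero_iff_eq_C.1 (hdeg ▸ hg)⟩
  obtain ⟨-, hx⟩ := LinearIndependent.pair_iff.1 hind y (-x) (by
    rw [smul_eq_C_mul, smul_eq_C_mul, map_neg]; ring)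
  simpa [neg_eq_zero.1 hx] using hind.ne_zero 0

theorem mul_eq_mul_of_sq_eq_of_isHomogeneous [CharZero K] {d : ℕ} {f₁ f₂ : MvPolynomial σ K}
    (hg : g.IsHomogeneous d) (hh : h.IsHomogeneous d) (hind : LinearIndependent K ![g, h])
    (hf₁ : f₁.IsHomogeneous d) (hf₂ : f₂.IsHomogeneous d)
    (ha₁ : a₁ ≠ 0) (hb₁ : b₁ ≠ 0) (ha₂ : a₂ ≠ 0) (hb₂ : b₂ ≠ 0)
    (e₁ : a₁ • g ^ 2 + b₁ • h ^ 2 = f₁ ^ 2) (e₂ : a₂ • g ^ 2 + b₂ • h ^ 2 = f₂ ^ 2) :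
    a₁ * b₂ = a₂ * b₁ := by
  have hg0 : g ≠ 0 := by simpa using hind.ne_zero 0
  have hh0 : h ≠ 0 := by simpa using hind.ne_zero 1
  obtain ⟨g₁, h₁, p, hrel, rfl, rfl⟩ := UniqueFactorizationMonoid.exists_reduced_factors g hg0 h
  have hp : p ≠ 0 := left_ne_zero_of_mul hg0
  have hdeg : ∀ {u}, u ≠ 0 → (p * u).IsHomogeneous d → p.totalDegree + u.totalDegree = d :=
    fun hu hpu => by rw [← totalDegree_mul_of_isDomain hp hu, hpu.totalDegree (mul_ne_zero hp hu)]
  have hdeg_g := hdeg (right_ne_zero_of_mul hg0) hg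
  have hdeg_h := hdeg (right_ne_zero_of_mul hh0) hh
  have hg₁ : g₁.totalDegree ≠ 0 := totalDegree_ne_zero_of_linearIndependent hind (by omega)
  obtain ⟨φ₁, rfl, E₁⟩ := exists_eq_mul_of_sq_eq_of_common_factor hp e₁
  obtain ⟨φ₂, rfl, E₂⟩ := exists_eq_mul_of_sq_eq_of_common_factor hp e₂
  have hφ₁ := ne_zero_of_sq_eq hrel hg₁ hb₁ E₁
  have hφ₂ := ne_zero_of_sq_eq hrel hg₁ hb₂ E₂
  have hdeg_φ₁ := hdeg hφ₁ hf₁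
  have hdeg_φ₂ := hdeg hφ₂ hf₂
  exact mul_eq_mul_of_isRelPrime_of_sq_eq hrel hg₁ hφ₁ hφ₂ (by omega) ha₁ hb₁ ha₂ hb₂ E₁ E₂

theorem exists_eq_smul_of_sq_eq_of_isHomogeneous [CharZero K] {d : ℕ}
    (hg : g.IsHomogeneous d) (hh : h.IsHomogeneous d) (hind : LinearIndependent K ![g, h]) :
    ∃ c₀ : K × K, ∀ c : K × K, c.1 ≠ 0 → c.2 ≠ 0 →
      (∃ f : MvPolynomial σ K, f.IsHomogeneous d ∧ c.1 • g ^ 2 + c.2 • h ^ 2 = f ^ 2) →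
      ∃ t : K, c = t • c₀ := by
  by_cases hex : ∃ c₀ : K × K, c₀.1 ≠ 0 ∧ c₀.2 ≠ 0 ∧
      ∃ f : MvPolynomial σ K, f.IsHomogeneous d ∧ c₀.1 • g ^ 2 + c₀.2 • h ^ 2 = f ^ 2
  · obtain ⟨c₀, h₁, h₂, f₀, hf₀, e₀⟩ := hex
    exact ⟨c₀, fun c hc₁ hc₂ ⟨f, hf, e⟩ => Prod.exists_eq_smul_of_mul_eq_mul h₁
      (mul_eq_mul_of_sq_eq_of_isHomogeneous hg hh hind hf hf₀ hc₁ hc₂ h₁ h₂ e e₀)⟩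
  · exact ⟨0, fun c hc₁ hc₂ hc => (hex ⟨c, hc₁, hc₂, hc⟩).elim⟩

end Field

end MvPolynomial

theorem stmt_7_general (d : ℕ) (g h : MvPolynomial (Fin 2) ℂ)
    (hg : g.IsHomogeneous d) (hh : h.IsHomogeneous d)
    (hind : LinearIndependent ℂ ![g, h]) :
    ∃ s : Finset (ℂ × ℂ), s.card ≤ 3 ∧
      ∀ c : ℂ × ℂ, c ≠ 0 →
        (∃ f : MvPolynomial (Fin 2) ℂ, f.IsHomogeneous d ∧
            c.1 • g ^ 2 + c.2 • h ^ 2 = f ^ 2) →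
        ∃ a ∈ s, ∃ t : ℂ, c = t • a := by
  obtain ⟨c₀, hc₀⟩ := exists_eq_smul_of_sq_eq_of_isHomogeneous hg hh hind
  refine ⟨{(1, 0), (0, 1), c₀}, Finset.card_le_three, fun c _ hc => ?_⟩
  by_cases hc₂ : c.2 = 0
  · exact ⟨(1, 0), by simp, c.1, by ext <;> simp [hc₂]⟩
  by_cases hc₁ : c.1 = 0
  · exact ⟨(0, 1), by simp, c.2, by ext <;> simp [hc₁]⟩
  obtain ⟨t, ht⟩ := hc₀ c hc₁ hc₂ hc
  exact ⟨c₀, by simp, t, ht⟩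

/-- For linearly independent degree-`d` binary forms `g, h`, the set of points
`(λ:μ) ∈ ℙ¹` such that `λg² + μh²` is the square of a degree-`d` form has at most `3`
elements.  Equivalently, the image of the quadratic Veronese `q : P_d → P_{2d}`,
`[f] ↦ [f²]`, contains no four collinear points: a line through two distinct points
`[g²], [h²]` of the image meets it in at most `3` points. -/
theorem stmt_7 (d : ℕ) (hd : 1 ≤ d) (g h : MvPolynomial (Fin 2) ℂ)
    (hg : g.IsHomogeneous d) (hh : h.IsHomogeneous d)
    (hind : LinearIndependent ℂ ![g, h]) :
    ∃ s : Finset (ℂ × ℂ), s.card ≤ 3 ∧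
      ∀ c : ℂ × ℂ, c ≠ 0 →
        (∃ f : MvPolynomial (Fin 2) ℂ, f.IsHomogeneous d ∧
            c.1 • g ^ 2 + c.2 • h ^ 2 = f ^ 2) →
        ∃ a ∈ s, ∃ t : ℂ, c = t • a :=
  stmt_7_general d g h hg hh hind
end

section
/- Let π : P^1 → P^1 be a morphism of degree 2d defined by a base-point-free pencil spanned by g^2 and h^2 with g, h coprime degree-d binary forms. If a member of the pencil equals 2D for some effective divisor D of degree d, then D is contained in the ramification divisor R_π of π, and consequently the pencil contains at most 3 members of the form 2D (since deg R_π = 4d − 2). -/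
open MvPolynomial

private lemma aux_deg2 (u : Fin 2 →₀ ℕ) : u.degree = u 0 + u 1 := by
  rw [Finsupp.degree_apply, Finset.sum_subset (Finset.subset_univ _)]
  · simp [Fin.sum_univ_two]
  · intro i _ hi
    simpa using Finsupp.notMem_support_iff.mp hi

private lemma aux_dvd_le {a b : ℕ} {P W : MvPolynomial (Fin 2) ℂ}
    (hP : P.IsHomogeneous a) (hPne : P ≠ 0) (hW : W.IsHomogeneous b) (hWne : W ≠ 0)
    (hdvd : P ∣ W) : a ≤ b := by
  by_contra hab
  push_neg at hab
  obtain ⟨q, rfl⟩ := hdvd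
  have hq : q ≠ 0 := right_ne_zero_of_mul hWne
  obtain ⟨u, hu⟩ := support_nonempty.mpr hq
  set n := u.degree with hn
  have hnr : n ∈ Finset.range (q.totalDegree + 1) := by
    rw [Finset.mem_range, Nat.lt_succ_iff, hn, Finsupp.degree]
    exact le_totalDegree hu
  have hcomp : homogeneousComponent n q ≠ 0 := by
    intro h0
    have hc := coeff_homogeneousComponent (n := n) (φ := q) u
    rw [h0, if_pos hn.symm] at hc
    exact mem_support_iff.mp hu hc.symm
  have hterm : ∀ m : ℕ, homogeneousComponent (a + n) (P * homogeneousComponent m q)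
      = if n = m then P * homogeneousComponent m q else 0 := by
    intro m
    rw [homogeneousComponent_of_mem
      ((mem_homogeneousSubmodule _ _).mpr (hP.mul (homogeneousComponent_isHomogeneous m q)))]
    by_cases hm : n = m
    · rw [if_pos (by omega), if_pos hm]
    · rw [if_neg (by omega), if_neg hm]
  have key : homogeneousComponent (a + n) (P * q) = P * homogeneousComponent n q := by
    conv_lhs => rw [← sum_homogeneousComponent (φ := q), Finset.mul_sum, map_sum]
    rw [Finset.sum_congr rfl (fun m _ => hterm m)]
    simp [Finset.sum_ite_eq, hnr]
  have h1 : homogeneousComponent (a + n) (P * q) = 0 := by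
    rw [homogeneousComponent_of_mem ((mem_homogeneousSubmodule _ _).mpr hW),
      if_neg (by omega)]
  exact mul_ne_zero hPne hcomp (key ▸ h1)

private lemma aux_not_unit {n : ℕ} (hn : 1 ≤ n) {p : MvPolynomial (Fin 2) ℂ}
    (hp : p.IsHomogeneous n) : ¬ IsUnit p := by
  intro hu
  have := aux_dvd_le hp hu.ne_zero (isHomogeneous_one _ _) one_ne_zero hu.dvd
  omega

private lemma aux_euler_t (i : Fin 2) (u : Fin 2 →₀ ℕ) (a : ℂ) :
    X i * pderiv i (monomial u a) = monomial u (a * u i) := by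
  rw [pderiv_monomial, X, monomial_mul, one_mul]
  rcases Nat.eq_zero_or_pos (u i) with h0 | hpos
  · rw [h0]; simp
  · congr 1
    rw [add_tsub_cancel_of_le (Finsupp.single_le_iff.mpr hpos)]

private lemma aux_euler {d : ℕ} {f : MvPolynomial (Fin 2) ℂ} (hf : f.IsHomogeneous d) :
    X 0 * pderiv 0 f + X 1 * pderiv 1 f = C (d : ℂ) * f := by
  conv_lhs => rw [f.as_sum]
  conv_rhs => rw [f.as_sum]
  rw [map_sum (pderiv 0), map_sum (pderiv 1), Finset.mul_sum, Finset.mul_sum, Finset.mul_sum,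
    ← Finset.sum_add_distrib]
  refine Finset.sum_congr rfl fun u hu => ?_
  rw [aux_euler_t, aux_euler_t, C_mul_monomial, ← map_add]
  congr 1
  have hdeg : u 0 + u 1 = d := by
    rw [← aux_deg2 u, Finsupp.degree_eq_weight_one]
    exact hf (mem_support_iff.mp hu)
  have : ((u 0 : ℂ) + (u 1 : ℂ)) = (d : ℂ) := by
    rw [← Nat.cast_add, hdeg]
  linear_combination coeff u f * this

private lemma aux_pderiv_homog {d : ℕ} (i : Fin 2) {f : MvPolynomial (Fin 2) ℂ}
    (hf : f.IsHomogeneous d) : (pderiv i f).IsHomogeneous (d - 1) := by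
  conv in f => rw [f.as_sum]
  rw [map_sum]
  apply IsHomogeneous.sum
  intro u hu
  rw [pderiv_monomial]
  rcases Nat.eq_zero_or_pos (u i) with h0 | hpos
  · rw [h0]
    norm_num
    exact isHomogeneous_zero _ _ _
  · apply isHomogeneous_monomial
    have hdu : u.degree = d := by
      rw [Finsupp.degree_eq_weight_one]
      exact hf (mem_support_iff.mp hu)
    rw [aux_deg2] at hdu
    rw [aux_deg2, Finsupp.tsub_apply, Finsupp.tsub_apply]
    fin_cases i <;> simp [Finsupp.single_apply] at hpos ⊢ <;> omega

private lemma aux_np {c a : ℂ × ℂ} (ha : a ≠ 0) (hn : ¬ ∃ t : ℂ, c = t • a) :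
    c.1 * a.2 - c.2 * a.1 ≠ 0 := by
  intro hdet
  apply hn
  have h12 : a.1 ≠ 0 ∨ a.2 ≠ 0 := by
    by_contra hb; push_neg at hb; exact ha (Prod.ext_iff.mpr ⟨hb.1, hb.2⟩)
  rcases h12 with h1 | h2
  · refine ⟨c.1 / a.1, Prod.ext_iff.mpr ⟨?_, ?_⟩⟩
    · simp only [Prod.smul_fst, smul_eq_mul]; field_simp
    · simp only [Prod.smul_snd, smul_eq_mul]; field_simp; linear_combination -hdet
  · refine ⟨c.2 / a.2, Prod.ext_iff.mpr ⟨?_, ?_⟩⟩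
    · simp only [Prod.smul_fst, smul_eq_mul]; field_simp; linear_combination hdet
    · simp only [Prod.smul_snd, smul_eq_mul]; field_simp

private lemma aux_detswap {x y : ℂ × ℂ} (hx : x.1 * y.2 - x.2 * y.1 ≠ 0) :
    y.1 * x.2 - y.2 * x.1 ≠ 0 := fun hz => hx (by linear_combination -hz)

/-- Let `π : ℙ¹ → ℙ¹` be the degree-`2d` morphism defined by the base-point-free pencil
spanned by `g²` and `h²`, with `g, h` coprime degree-`d` binary forms.  If a member
`c₁g² + c₂h²` of the pencil equals `2D`, i.e. is the square `f²` of a degree-`d` form `f`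
(whose divisor of zeros is `D`), then `D` is contained in the ramification divisor of `π`:
`f` divides the Jacobian/Wronskian `∂₀(g²)·∂₁(h²) - ∂₁(g²)·∂₀(h²)`, whose divisor is `R_π`
of degree `4d - 2`.  Consequently the pencil contains at most `3` members of the form `2D`. -/
theorem stmt_8 (d : ℕ) (hd : 1 ≤ d) (g h : MvPolynomial (Fin 2) ℂ)
    (hg : g.IsHomogeneous d) (hh : h.IsHomogeneous d)
    (hcop : IsRelPrime g h) :
    (∀ c : ℂ × ℂ, c ≠ 0 → ∀ f : MvPolynomial (Fin 2) ℂ, f.IsHomogeneous d →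
        c.1 • g ^ 2 + c.2 • h ^ 2 = f ^ 2 →
        f ∣ (pderiv 0 (g ^ 2) * pderiv 1 (h ^ 2) - pderiv 1 (g ^ 2) * pderiv 0 (h ^ 2))) ∧
    (∃ s : Finset (ℂ × ℂ), s.card ≤ 3 ∧
      ∀ c : ℂ × ℂ, c ≠ 0 →
        (∃ f : MvPolynomial (Fin 2) ℂ, f.IsHomogeneous d ∧
            c.1 • g ^ 2 + c.2 • h ^ 2 = f ^ 2) →
        ∃ a ∈ s, ∃ t : ℂ, c = t • a) := by
  classical
  set W : MvPolynomial (Fin 2) ℂ :=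
    pderiv 0 (g ^ 2) * pderiv 1 (h ^ 2) - pderiv 1 (g ^ 2) * pderiv 0 (h ^ 2) with hWdef
  set K : MvPolynomial (Fin 2) ℂ :=
    g * h * (pderiv 0 g * pderiv 1 h - pderiv 1 g * pderiv 0 h) with hKdef
  have hWK : W = C (4 : ℂ) * K := by
    rw [hWdef, hKdef, pderiv_pow, pderiv_pow, pderiv_pow, pderiv_pow,
      show ((C (4:ℂ)) : MvPolynomial (Fin 2) ℂ) = 4 from map_ofNat _ 4]
    push_cast
    ring
  -- Part 1
  have part1 : ∀ c : ℂ × ℂ, c ≠ 0 → ∀ f : MvPolynomial (Fin 2) ℂ, f.IsHomogeneous d →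
      c.1 • g ^ 2 + c.2 • h ^ 2 = f ^ 2 → f ∣ W := by
    intro c hc f hf heq
    have hBi : ∀ i : Fin 2,
        C c.1 * (g * pderiv i g) * 2 + C c.2 * (h * pderiv i h) * 2 = f * (2 * pderiv i f) := by
      intro i
      have hpd := congrArg (pderiv i) heq
      rw [map_add, (pderiv i).map_smul, (pderiv i).map_smul, pderiv_pow, pderiv_pow,
        pderiv_pow, smul_eq_C_mul, smul_eq_C_mul] at hpd
      push_cast at hpd
      linear_combination hpd
    have hdvd1 : f ∣ C (c.1 * 2) * K := by
      have hcomb : C (c.1 * 2) * K =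
          (C c.1 * (g * pderiv 0 g) * 2 + C c.2 * (h * pderiv 0 h) * 2) * (h * pderiv 1 h)
          - (C c.1 * (g * pderiv 1 g) * 2 + C c.2 * (h * pderiv 1 h) * 2) * (h * pderiv 0 h) := by
        rw [hKdef, map_mul, show ((C (2:ℂ)) : MvPolynomial (Fin 2) ℂ) = 2 from map_ofNat _ 2]
        ring
      rw [hcomb, hBi 0, hBi 1]
      exact dvd_sub ((dvd_mul_right f _).mul_right _) ((dvd_mul_right f _).mul_right _)
    have hdvd2 : f ∣ C (c.2 * 2) * K := by
      have hcomb : C (c.2 * 2) * K =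
          (C c.1 * (g * pderiv 1 g) * 2 + C c.2 * (h * pderiv 1 h) * 2) * (g * pderiv 0 g)
          - (C c.1 * (g * pderiv 0 g) * 2 + C c.2 * (h * pderiv 0 h) * 2) * (g * pderiv 1 g) := by
        rw [hKdef, map_mul, show ((C (2:ℂ)) : MvPolynomial (Fin 2) ℂ) = 2 from map_ofNat _ 2]
        ring
      rw [hcomb, hBi 0, hBi 1]
      exact dvd_sub ((dvd_mul_right f _).mul_right _) ((dvd_mul_right f _).mul_right _)
    have hc12 : c.1 ≠ 0 ∨ c.2 ≠ 0 := by
      by_contra hb; push_neg at hb; exact hc (Prod.ext_iff.mpr ⟨hb.1, hb.2⟩)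
    have hK : f ∣ K := by
      rcases hc12 with h1 | h2
      · have : K = C (c.1 * 2)⁻¹ * (C (c.1 * 2) * K) := by
          rw [← mul_assoc, ← map_mul, inv_mul_cancel₀ (by simp [h1]), C_1, one_mul]
        rw [this]; exact hdvd1.mul_left _
      · have : K = C (c.2 * 2)⁻¹ * (C (c.2 * 2) * K) := by
          rw [← mul_assoc, ← map_mul, inv_mul_cancel₀ (by simp [h2]), C_1, one_mul]
        rw [this]; exact hdvd2.mul_left _
    rw [hWK]
    exact hK.mul_left _
  refine ⟨part1, ?_⟩
  -- nonvanishing facts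
  have hgne : g ≠ 0 := by
    intro h0
    exact aux_not_unit hd hh (isRelPrime_zero_left.mp (h0 ▸ hcop))
  have hhne : h ≠ 0 := by
    intro h0
    exact aux_not_unit hd hg (isRelPrime_zero_right.mp (h0 ▸ hcop))
  have hcd : (C ((d : ℂ)) : MvPolynomial (Fin 2) ℂ) ≠ 0 := by
    simp only [ne_eq, map_eq_zero, Nat.cast_eq_zero]
    omega
  have hWp : pderiv 0 g * pderiv 1 h - pderiv 1 g * pderiv 0 h ≠ 0 := by
    intro hw0
    have eg := aux_euler hg
    have eh := aux_euler hh
    have key : C ((d:ℂ)) * (g * pderiv 1 h) = C ((d:ℂ)) * (pderiv 1 g * h) := by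
      linear_combination pderiv 1 g * eh - pderiv 1 h * eg + X 0 * hw0
    have hgh1 : g * pderiv 1 h = pderiv 1 g * h := mul_left_cancel₀ hcd key
    have hg1 : pderiv 1 g = 0 := by
      by_contra hne
      have hdvd : g ∣ pderiv 1 g * h := ⟨pderiv 1 h, by linear_combination -hgh1⟩
      have := aux_dvd_le hg hgne (aux_pderiv_homog 1 hg) hne
        (hcop.dvd_of_dvd_mul_right hdvd)
      omega
    have hh1 : pderiv 1 h = 0 := by
      have : g * pderiv 1 h = 0 := by rw [hgh1, hg1, zero_mul]
      exact (mul_eq_zero.mp this).resolve_left hgne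
    have hinv : (C ((d:ℂ)⁻¹) : MvPolynomial (Fin 2) ℂ) * C ((d:ℂ)) = 1 := by
      rw [← map_mul, inv_mul_cancel₀ (by exact_mod_cast fun h0 => hcd (by rw [h0]; simp) : (d:ℂ) ≠ 0), C_1]
    rw [hg1] at eg
    rw [hh1] at eh
    have hXg : X 0 ∣ g := ⟨C ((d:ℂ)⁻¹) * pderiv 0 g, by linear_combination (-(C ((d:ℂ)⁻¹))) * eg - g * hinv⟩
    have hXh : X 0 ∣ h := ⟨C ((d:ℂ)⁻¹) * pderiv 0 h, by linear_combination (-(C ((d:ℂ)⁻¹))) * eh - h * hinv⟩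
    exact aux_not_unit le_rfl (isHomogeneous_X _ 0) (hcop hXg hXh)
  have hKne : K ≠ 0 := mul_ne_zero (mul_ne_zero hgne hhne) hWp
  have hWne : W ≠ 0 := by
    rw [hWK]
    exact mul_ne_zero (by simp) hKne
  have hWhom : W.IsHomogeneous (4 * d - 2) := by
    rw [hWK]
    have hKh : K.IsHomogeneous (d + d + (d - 1 + (d - 1))) :=
      (hg.mul hh).mul (((aux_pderiv_homog 0 hg).mul (aux_pderiv_homog 1 hh)).sub
        ((aux_pderiv_homog 1 hg).mul (aux_pderiv_homog 0 hh)))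
    have : d + d + (d - 1 + (d - 1)) = 4 * d - 2 := by omega
    exact this ▸ hKh.C_mul (4 : ℂ)
  -- f in a square member is nonzero
  have hfne : ∀ c : ℂ × ℂ, c ≠ 0 → ∀ f : MvPolynomial (Fin 2) ℂ, f.IsHomogeneous d →
      c.1 • g ^ 2 + c.2 • h ^ 2 = f ^ 2 → f ≠ 0 := by
    intro c hc f hf heq hf0
    rw [hf0, smul_eq_C_mul, smul_eq_C_mul] at heq
    have hC : C c.1 * g ^ 2 + C c.2 * h ^ 2 = 0 := by rw [heq]; ring
    have hc12 : c.1 ≠ 0 ∨ c.2 ≠ 0 := by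
      by_contra hb; push_neg at hb; exact hc (Prod.ext_iff.mpr ⟨hb.1, hb.2⟩)
    have hcp2 : IsRelPrime (g ^ 2) (h ^ 2) := hcop.pow
    rcases hc12 with h1 | h2
    · have hinv : (C (c.1⁻¹) : MvPolynomial (Fin 2) ℂ) * C c.1 = 1 := by
        rw [← map_mul, inv_mul_cancel₀ h1, C_1]
      have hdv : h ^ 2 ∣ g ^ 2 :=
        ⟨C (c.1⁻¹) * (-C c.2), by linear_combination (C (c.1⁻¹)) * hC - g ^ 2 * hinv⟩
      have hu : IsUnit (h ^ 2) := hcp2 hdv dvd_rfl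
      exact aux_not_unit (by omega) (hh.pow 2) hu
    · have hinv : (C (c.2⁻¹) : MvPolynomial (Fin 2) ℂ) * C c.2 = 1 := by
        rw [← map_mul, inv_mul_cancel₀ h2, C_1]
      have hdv : g ^ 2 ∣ h ^ 2 :=
        ⟨C (c.2⁻¹) * (-C c.1), by linear_combination (C (c.2⁻¹)) * hC - h ^ 2 * hinv⟩
      have hu : IsUnit (g ^ 2) := hcp2.symm hdv dvd_rfl
      exact aux_not_unit (by omega) (hg.pow 2) hu
  -- distinct members give coprime square roots
  have hmc : ∀ (c c' : ℂ × ℂ) (f f' : MvPolynomial (Fin 2) ℂ),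
      c.1 * c'.2 - c.2 * c'.1 ≠ 0 →
      c.1 • g ^ 2 + c.2 • h ^ 2 = f ^ 2 → c'.1 • g ^ 2 + c'.2 • h ^ 2 = f' ^ 2 →
      IsRelPrime f f' := by
    intro c c' f f' hdet he1 he2
    rw [smul_eq_C_mul, smul_eq_C_mul] at he1 he2
    set D : ℂ := c.1 * c'.2 - c.2 * c'.1 with hDdef
    have G2 : C D * g ^ 2 = C c'.2 * f ^ 2 - C c.2 * f' ^ 2 := by
      rw [hDdef, map_sub, map_mul, map_mul]
      linear_combination C c'.2 * he1 - C c.2 * he2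
    have H2 : C D * h ^ 2 = C c.1 * f' ^ 2 - C c'.1 * f ^ 2 := by
      rw [hDdef, map_sub, map_mul, map_mul]
      linear_combination C c.1 * he2 - C c'.1 * he1
    have hcp : IsRelPrime (g ^ 2) (h ^ 2) := hcop.pow
    have hDu : IsUnit (C D : MvPolynomial (Fin 2) ℂ) := (isUnit_iff_ne_zero.mpr hdet).map C
    intro p hp hp'
    have p1 : p ∣ f ^ 2 := dvd_pow hp two_ne_zero
    have p2 : p ∣ f' ^ 2 := dvd_pow hp' two_ne_zero
    apply hcp
    · rw [← hDu.dvd_mul_left, G2]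
      exact dvd_sub (dvd_mul_of_dvd_right p1 _) (dvd_mul_of_dvd_right p2 _)
    · rw [← hDu.dvd_mul_left, H2]
      exact dvd_sub (dvd_mul_of_dvd_right p2 _) (dvd_mul_of_dvd_right p1 _)
  -- no four pairwise-independent square members
  have no4 : ∀ c₁ c₂ c₃ c₄ : ℂ × ℂ, c₁ ≠ 0 → c₂ ≠ 0 → c₃ ≠ 0 → c₄ ≠ 0 →
      (∃ f, f.IsHomogeneous d ∧ c₁.1 • g ^ 2 + c₁.2 • h ^ 2 = f ^ 2) →
      (∃ f, f.IsHomogeneous d ∧ c₂.1 • g ^ 2 + c₂.2 • h ^ 2 = f ^ 2) →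
      (∃ f, f.IsHomogeneous d ∧ c₃.1 • g ^ 2 + c₃.2 • h ^ 2 = f ^ 2) →
      (∃ f, f.IsHomogeneous d ∧ c₄.1 • g ^ 2 + c₄.2 • h ^ 2 = f ^ 2) →
      c₁.1 * c₂.2 - c₁.2 * c₂.1 ≠ 0 → c₁.1 * c₃.2 - c₁.2 * c₃.1 ≠ 0 →
      c₁.1 * c₄.2 - c₁.2 * c₄.1 ≠ 0 → c₂.1 * c₃.2 - c₂.2 * c₃.1 ≠ 0 →
      c₂.1 * c₄.2 - c₂.2 * c₄.1 ≠ 0 → c₃.1 * c₄.2 - c₃.2 * c₄.1 ≠ 0 → False := by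
    intro c₁ c₂ c₃ c₄ hc1 hc2 hc3 hc4 hq1 hq2 hq3 hq4 d12 d13 d14 d23 d24 d34
    obtain ⟨f₁, hf1, he1⟩ := hq1
    obtain ⟨f₂, hf2, he2⟩ := hq2
    obtain ⟨f₃, hf3, he3⟩ := hq3
    obtain ⟨f₄, hf4, he4⟩ := hq4
    have hn1 := hfne c₁ hc1 f₁ hf1 he1
    have hn2 := hfne c₂ hc2 f₂ hf2 he2
    have hn3 := hfne c₃ hc3 f₃ hf3 he3
    have hn4 := hfne c₄ hc4 f₄ hf4 he4
    have hd1 := part1 c₁ hc1 f₁ hf1 he1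
    have hd2 := part1 c₂ hc2 f₂ hf2 he2
    have hd3 := part1 c₃ hc3 f₃ hf3 he3
    have hd4 := part1 c₄ hc4 f₄ hf4 he4
    have cop12 := hmc c₁ c₂ f₁ f₂ d12 he1 he2
    have cop13 := hmc c₁ c₃ f₁ f₃ d13 he1 he3
    have cop14 := hmc c₁ c₄ f₁ f₄ d14 he1 he4
    have cop23 := hmc c₂ c₃ f₂ f₃ d23 he2 he3
    have cop24 := hmc c₂ c₄ f₂ f₄ d24 he2 he4
    have cop34 := hmc c₃ c₄ f₃ f₄ d34 he3 he4
    have dvd34 : f₃ * f₄ ∣ W := cop34.mul_dvd hd3 hd4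
    have dvd234 : f₂ * (f₃ * f₄) ∣ W := (cop23.mul_right cop24).mul_dvd hd2 dvd34
    have dvd1234 : f₁ * (f₂ * (f₃ * f₄)) ∣ W :=
      (cop12.mul_right (cop13.mul_right cop14)).mul_dvd hd1 dvd234
    have hPh : (f₁ * (f₂ * (f₃ * f₄))).IsHomogeneous (d + (d + (d + d))) :=
      hf1.mul (hf2.mul (hf3.mul hf4))
    have hPne : f₁ * (f₂ * (f₃ * f₄)) ≠ 0 :=
      mul_ne_zero hn1 (mul_ne_zero hn2 (mul_ne_zero hn3 hn4))
    have := aux_dvd_le hPh hPne hWhom hWne dvd1234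
    omega
  -- assemble the finite set
  by_cases h1 : ∃ c : ℂ × ℂ, c ≠ 0 ∧
      ∃ f : MvPolynomial (Fin 2) ℂ, f.IsHomogeneous d ∧ c.1 • g ^ 2 + c.2 • h ^ 2 = f ^ 2
  · obtain ⟨a, ha0, haf⟩ := h1
    by_cases h2 : ∃ c : ℂ × ℂ, (c ≠ 0 ∧
        ∃ f : MvPolynomial (Fin 2) ℂ, f.IsHomogeneous d ∧ c.1 • g ^ 2 + c.2 • h ^ 2 = f ^ 2) ∧
        c.1 * a.2 - c.2 * a.1 ≠ 0
    · obtain ⟨b, ⟨hb0, hbf⟩, hba⟩ := h2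
      by_cases h3 : ∃ c : ℂ × ℂ, (c ≠ 0 ∧
          ∃ f : MvPolynomial (Fin 2) ℂ, f.IsHomogeneous d ∧ c.1 • g ^ 2 + c.2 • h ^ 2 = f ^ 2) ∧
          c.1 * a.2 - c.2 * a.1 ≠ 0 ∧ c.1 * b.2 - c.2 * b.1 ≠ 0
      · obtain ⟨e, ⟨he0, hef⟩, hea, heb⟩ := h3
        refine ⟨{a, b, e}, ?_, ?_⟩
        · exact (Finset.card_insert_le _ _).trans (Nat.succ_le_succ
            ((Finset.card_insert_le _ _).trans (Nat.succ_le_succ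
              (Finset.card_singleton e).le)))
        · intro c hc hf
          by_cases pa : ∃ t : ℂ, c = t • a
          · exact ⟨a, by simp, pa⟩
          by_cases pb : ∃ t : ℂ, c = t • b
          · exact ⟨b, by simp, pb⟩
          by_cases pe : ∃ t : ℂ, c = t • e
          · exact ⟨e, by simp, pe⟩
          exact absurd (no4 c a b e hc ha0 hb0 he0 hf haf hbf hef
            (aux_np ha0 pa) (aux_np hb0 pb) (aux_np he0 pe)
            (aux_detswap hba) (aux_detswap hea) (aux_detswap heb)) id
      · refine ⟨{a, b}, ?_, ?_⟩
        · exact (Finset.card_insert_le _ _).trans (Nat.succ_le_succ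
            (Finset.card_singleton b).le) |>.trans (by norm_num)
        · intro c hc hf
          by_cases pa : ∃ t : ℂ, c = t • a
          · exact ⟨a, by simp, pa⟩
          by_cases pb : ∃ t : ℂ, c = t • b
          · exact ⟨b, by simp, pb⟩
          exact absurd ⟨c, ⟨hc, hf⟩, aux_np ha0 pa, aux_np hb0 pb⟩ h3
    · refine ⟨{a}, by simp, ?_⟩
      intro c hc hf
      by_cases pa : ∃ t : ℂ, c = t • a
      · exact ⟨a, by simp, pa⟩
      · exact absurd ⟨c, ⟨hc, hf⟩, aux_np ha0 pa⟩ h2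
  · exact ⟨∅, by simp, fun c hc hf => absurd ⟨c, hc, hf⟩ h1⟩
end

section
/- (Hopf's lemma for the quadratic Veronese) Let H ⊂ C[X,Y]_d be a linear subspace of binary forms of degree d with dim H = r + 1. Then the linear span of the set of squares {f^2 : f ∈ H} inside C[X,Y]_{2d} has dimension at least 2r + 1. -/
/-!
Fix a monomial order. The leading monomials of the nonzero elements of a finite-dimensional space
`V` of polynomials are exactly `dim V` in number, and the leading monomial of a product is the sum
of the leading monomials of the factors. So the leading monomials of `V * V` contain the sumset
`A + A` of the set `A` of leading monomials of `V`, which has at least `2|A| - 1` elements because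
monomials are linearly ordered (Cauchy–Davenport). When `2` is invertible, polarization
`2fg = (f + g)² - f² - g²` shows that the squares of elements of `V` span `V * V`.
-/

open MvPolynomial Module Submodule
open scoped Pointwise

namespace MonomialOrder

variable {σ : Type*} (m : MonomialOrder σ)

section CommRing

variable {R : Type*} [CommRing R] [NoZeroDivisors R]

theorem linearIndependent_of_injective_degree {ι : Type*} {p : ι → MvPolynomial σ R}
    (hp : ∀ i, p i ≠ 0) (hinj : Function.Injective (m.degree ∘ p)) : LinearIndependent R p := by
  classical
  rw [linearIndependent_iff']
  intro s g hsum
  by_contra! hne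
  -- the largest leading monomial among the terms with nonzero coefficient cannot cancel
  obtain ⟨i₀, hi₀, hmax⟩ := (s.filter (g · ≠ 0)).exists_max_image
    (fun i => m.toSyn (m.degree (p i))) (by simpa [Finset.filter_nonempty_iff] using hne)
  rw [Finset.mem_filter] at hi₀
  have hcoeff := congrArg (coeff (m.degree (p i₀))) hsum
  rw [coeff_sum, Finset.sum_eq_single_of_mem i₀ hi₀.1] at hcoeff
  · exact mul_ne_zero hi₀.2 (m.coeff_degree_ne_zero_iff.mpr (hp i₀)) (by simpa using hcoeff)
  · intro j hj hji₀
    by_cases hgj : g j = 0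
    · simp [hgj]
    have hlt : m.toSyn (m.degree (p j)) < m.toSyn (m.degree (p i₀)) :=
      (hmax j (Finset.mem_filter.mpr ⟨hj, hgj⟩)).lt_of_ne
        fun h => hji₀ (hinj (m.toSyn.injective h))
    simp [m.coeff_eq_zero_of_lt hlt]

/-- Leading monomials are taken in `m.syn`, where they are linearly ordered. -/
def leadingMonomials (V : Submodule R (MvPolynomial σ R)) : Set m.syn :=
  {a | ∃ p ∈ V, p ≠ 0 ∧ m.toSyn (m.degree p) = a}

theorem leadingMonomials_add_subset_mul (V W : Submodule R (MvPolynomial σ R)) :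
    m.leadingMonomials V + m.leadingMonomials W ⊆ m.leadingMonomials (V * W) := by
  rintro _ ⟨_, ⟨p, hp, hp0, rfl⟩, _, ⟨q, hq, hq0, rfl⟩, rfl⟩
  exact ⟨p * q, mul_mem_mul hp hq, mul_ne_zero hp0 hq0, by rw [m.degree_mul hp0 hq0, map_add]⟩

end CommRing

variable {K : Type*} [Field K] (V : Submodule K (MvPolynomial σ K)) [FiniteDimensional K V]

theorem card_le_finrank_of_subset_leadingMonomials {T : Finset m.syn}
    (hT : (T : Set m.syn) ⊆ m.leadingMonomials V) : T.card ≤ finrank K V := by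
  choose p hpV hp0 hpdeg using fun t : T => hT t.2
  have hli : LinearIndependent K (fun t : T => (⟨p t, hpV t⟩ : V)) := by
    apply LinearIndependent.of_comp V.subtype
    refine m.linearIndependent_of_injective_degree hp0 fun t u h => Subtype.ext ?_
    rw [← hpdeg t, ← hpdeg u]
    exact congrArg m.toSyn h
  simpa using hli.fintype_card_le_finrank

theorem leadingMonomials_finite : (m.leadingMonomials V).Finite := by
  by_contra h
  obtain ⟨T, hT, hcard⟩ := Set.Infinite.exists_subset_card_eq h (finrank K V + 1)
  have := m.card_le_finrank_of_subset_leadingMonomials V hT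
  omega

theorem ncard_leadingMonomials : (m.leadingMonomials V).ncard = finrank K V := by
  have hfin := m.leadingMonomials_finite V
  refine le_antisymm ?_ ?_
  · rw [Set.ncard_eq_toFinset_card _ hfin]
    exact m.card_le_finrank_of_subset_leadingMonomials V (by simp)
  have : Fintype (m.leadingMonomials V) := hfin.fintype
  -- a nonzero `p ∈ V` has a nonzero coefficient at its own leading monomial
  let c : V →ₗ[K] (m.leadingMonomials V → K) :=
    LinearMap.pi fun a => (lcoeff K (m.toSyn.symm a)).comp V.subtype
  have hc : Function.Injective c := by
    refine (injective_iff_map_eq_zero c).mpr fun ⟨p, hp⟩ hcp => ?_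
    by_contra hne
    have hp0 : p ≠ 0 := fun h => hne (Subtype.ext h)
    have := congrFun hcp ⟨_, p, hp, hp0, rfl⟩
    simp [c, m.coeff_degree_ne_zero_iff.mpr hp0] at this
  calc finrank K V ≤ finrank K (m.leadingMonomials V → K) :=
        LinearMap.finrank_le_finrank_of_injective hc
    _ = (m.leadingMonomials V).ncard := by
      rw [finrank_fintype_fun_eq_card, ← Nat.card_eq_fintype_card, Nat.card_coe_set_eq]

end MonomialOrder

theorem Submodule.span_sq_eq_mul_self {K A : Type*} [Field K] [CommRing A] [Algebra K A]
    (h2 : (2 : K) ≠ 0) (V : Submodule K A) :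
    span K ((fun f => f ^ 2) '' (V : Set A)) = V * V := by
  refine le_antisymm (span_le.mpr ?_) (mul_le.mpr fun f hf g hg => ?_)
  · rintro _ ⟨f, hf, rfl⟩
    show f ^ 2 ∈ V * V
    exact pow_two f ▸ mul_mem_mul hf hf
  have hsq : ∀ h ∈ V, h ^ 2 ∈ span K ((fun f => f ^ 2) '' (V : Set A)) :=
    fun h hh => subset_span ⟨h, hh, rfl⟩
  have hpolar : f * g = (2⁻¹ : K) • ((f + g) ^ 2 - f ^ 2 - g ^ 2) := by
    rw [show (f + g) ^ 2 - f ^ 2 - g ^ 2 = (2 : K) • (f * g) by rw [two_smul]; ring,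
      smul_smul, inv_mul_cancel₀ h2, one_smul]
  rw [hpolar]
  exact smul_mem _ _ (sub_mem (sub_mem (hsq _ (add_mem hf hg)) (hsq f hf)) (hsq g hg))

theorem MvPolynomial.two_mul_finrank_sub_one_le_finrank_mul_self {σ K : Type*} [LinearOrder σ]
    [WellFoundedGT σ] [Field K] (V : Submodule K (MvPolynomial σ K)) [FiniteDimensional K V] :
    2 * finrank K V - 1 ≤ finrank K ↥(V * V) := by
  have hV : V.FG := (fg_iff_finiteDimensional V).mpr inferInstance
  have : FiniteDimensional K ↥(V * V) := (fg_iff_finiteDimensional _).mp (hV.mul hV)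
  let m : MonomialOrder σ := MonomialOrder.lex
  have hfin := m.leadingMonomials_finite V
  set A := hfin.toFinset
  have hA : A.card = finrank K V := by
    rw [← m.ncard_leadingMonomials V, Set.ncard_eq_toFinset_card _ hfin]
  rcases A.eq_empty_or_nonempty with hA0 | hAne
  · simp [← hA, hA0]
  calc 2 * finrank K V - 1 = A.card + A.card - 1 := by omega
    _ ≤ (A + A).card := cauchy_davenport_add_of_linearOrder_isCancelAdd hAne hAne
    _ ≤ finrank K ↥(V * V) := m.card_le_finrank_of_subset_leadingMonomials _ (by
        simpa [A, Finset.coe_add] using m.leadingMonomials_add_subset_mul V V)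

theorem stmt_9_general (r : ℕ) (H : Submodule ℂ (MvPolynomial (Fin 2) ℂ))
    (hdim : Module.finrank ℂ H = r + 1) :
    2 * r + 1 ≤
      Module.finrank ℂ (Submodule.span ℂ ((fun f => f ^ 2) '' (H : Set (MvPolynomial (Fin 2) ℂ)))) := by
  have : FiniteDimensional ℂ H := Module.finite_of_finrank_pos (by omega)
  rw [Submodule.span_sq_eq_mul_self two_ne_zero]
  have := MvPolynomial.two_mul_finrank_sub_one_le_finrank_mul_self H
  omega

/-- (Hopf's lemma for the quadratic Veronese.)  If `H` is an `(r+1)`-dimensional linear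
subspace of the binary forms of degree `d`, then the linear span of the squares
`{f² : f ∈ H}` inside the binary forms of degree `2d` has dimension at least `2r + 1`. -/
theorem stmt_9 (d r : ℕ) (H : Submodule ℂ (MvPolynomial (Fin 2) ℂ))
    (hH : H ≤ MvPolynomial.homogeneousSubmodule (Fin 2) ℂ d)
    (hdim : Module.finrank ℂ H = r + 1) :
    2 * r + 1 ≤
      Module.finrank ℂ (Submodule.span ℂ ((fun f => f ^ 2) '' (H : Set (MvPolynomial (Fin 2) ℂ)))) :=
  stmt_9_general r H hdim
end

section
/- Let W ⊂ C[X,Y]_a be a 2-dimensional subspace spanned by F and G, let h ∈ C[X,Y]_{d−ra}, and let H = h·S^r(W) = span{hF^r, hF^{r-1}G, …, hG^r} ⊂ C[X,Y]_d. Then dim H = r + 1 and the span of the squares of elements of H inside C[X,Y]_{2d} has dimension exactly 2r + 1. -/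
set_option maxHeartbeats 1000000
set_option synthInstance.maxHeartbeats 200000

noncomputable local instance : Field (FractionRing (MvPolynomial (Fin 2) ℂ)) := inferInstance

open Polynomial in
lemma aux_key_li (n : ℕ) (F G : MvPolynomial (Fin 2) ℂ)
    (hind : LinearIndependent ℂ ![F, G]) :
    LinearIndependent ℂ (fun i : Fin (n + 1) =>
      F ^ (n - (i : ℕ)) * G ^ (i : ℕ)) := by
  obtain ⟨hG0, hnot⟩ := linearIndependent_fin2.mp hind
  simp only [Matrix.cons_val_one, Matrix.head_cons, Matrix.cons_val_zero] at hG0 hnot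
  let K := FractionRing (MvPolynomial (Fin 2) ℂ)
  let ψ : MvPolynomial (Fin 2) ℂ →ₐ[ℂ] K :=
    IsScalarTower.toAlgHom ℂ (MvPolynomial (Fin 2) ℂ) K
  have hψinj : Function.Injective ψ := IsFractionRing.injective (MvPolynomial (Fin 2) ℂ) K
  have hGK : ψ G ≠ 0 := fun hc => hG0 (hψinj (by simpa using hc))
  set t : K := ψ F / ψ G with ht
  have htr : ∀ c : ℂ, t ≠ algebraMap ℂ K c := by
    intro c hc
    apply hnot c
    apply hψinj
    have h1 : ψ (c • G) = algebraMap ℂ K c * ψ G := by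
      rw [map_smul, Algebra.smul_def]
    rw [h1, ← hc, ht, div_mul_cancel₀ _ hGK]
  rw [Fintype.linearIndependent_iff]
  intro c hrel
  by_contra hex
  push_neg at hex
  obtain ⟨i, hci⟩ := hex
  have hKrel : ∑ j : Fin (n + 1), c j • ((ψ F) ^ (n - (j : ℕ)) * (ψ G) ^ (j : ℕ)) = 0 := by
    have := congrArg ψ hrel
    simpa [map_sum] using this
  have hterm : ∀ j : Fin (n + 1),
      t ^ (n - (j : ℕ)) * (ψ G) ^ n = (ψ F) ^ (n - (j : ℕ)) * (ψ G) ^ (j : ℕ) := by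
    intro j
    have h1 : (ψ G) ^ n = (ψ G) ^ (n - (j : ℕ)) * (ψ G) ^ (j : ℕ) := by
      rw [← pow_add]
      congr 1
      omega
    rw [h1, ← mul_assoc, ht, div_pow, div_mul_cancel₀ _ (pow_ne_zero _ hGK)]
  have hS : (∑ j : Fin (n + 1), c j • t ^ (n - (j : ℕ))) * (ψ G) ^ n = 0 := by
    rw [Finset.sum_mul]
    simp only [smul_mul_assoc, hterm]
    exact hKrel
  have hS0 : ∑ j : Fin (n + 1), c j • t ^ (n - (j : ℕ)) = 0 := by
    rcases mul_eq_zero.mp hS with h | h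
    · exact h
    · exact absurd h (pow_ne_zero _ hGK)
  set p : Polynomial ℂ := ∑ j : Fin (n + 1), Polynomial.C (c j) * Polynomial.X ^ (n - (j : ℕ))
    with hp
  have hpeval : Polynomial.aeval t p = 0 := by
    rw [hp, map_sum]
    simpa [Algebra.smul_def] using hS0
  have hp0 : p ≠ 0 := by
    intro h0
    apply hci
    have hc : p.coeff (n - (i : ℕ)) = c i := by
      rw [hp, Polynomial.finset_sum_coeff]
      rw [Finset.sum_eq_single i]
      · simp
      · intro j _ hji
        have : ¬ ((n - (i : ℕ)) = (n - (j : ℕ))) := by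
          have hi := i.isLt
          have hj := j.isLt
          intro hcon
          exact hji (Fin.ext (by omega))
        simp [Polynomial.coeff_C_mul, Polynomial.coeff_X_pow, this]
      · simp
    rw [← hc, h0, Polynomial.coeff_zero]
  have hint : IsIntegral ℂ t := (IsAlgebraic.isIntegral ⟨p, hp0, hpeval⟩)
  have hdeg : (minpoly ℂ t).degree = 1 :=
    IsAlgClosed.degree_eq_one_of_irreducible ℂ (minpoly.irreducible hint)
  have hq : (minpoly ℂ t).leadingCoeff = 1 := minpoly.monic hint
  have h0 : Polynomial.aeval t (minpoly ℂ t) = 0 := minpoly.aeval ℂ t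
  rw [Polynomial.eq_X_add_C_of_degree_eq_one hdeg, hq, Polynomial.C_1, one_mul,
    map_add, Polynomial.aeval_X, Polynomial.aeval_C, add_eq_zero_iff_eq_neg] at h0
  exact htr (-(minpoly ℂ t).coeff 0) (by rw [map_neg]; exact h0)

/-- (Equality case in Hopf's lemma; Eisenbud.)  Let `W = ⟨F, G⟩` be a 2-dimensional space
of binary forms of degree `a`, let `h` be a nonzero binary form of degree `b = d - ra`, and
let `H = h·Sʳ(W) = span{hFʳ, hF^{r-1}G, …, hGʳ}`.  Then `dim H = r + 1` and the span of the
squares of elements of `H` has dimension exactly `2r + 1`. -/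
theorem stmt_10 (a b r : ℕ) (F G h : MvPolynomial (Fin 2) ℂ)
    (hF : F.IsHomogeneous a) (hG : G.IsHomogeneous a)
    (hind : LinearIndependent ℂ ![F, G])
    (hh : h.IsHomogeneous b) (hh0 : h ≠ 0)
    (H : Submodule ℂ (MvPolynomial (Fin 2) ℂ))
    (hHdef : H = Submodule.span ℂ
      (Set.range fun i : Fin (r + 1) => h * F ^ (r - (i : ℕ)) * G ^ (i : ℕ))) :
    Module.finrank ℂ H = r + 1 ∧
    Module.finrank ℂ (Submodule.span ℂ
        ((fun f => f ^ 2) '' (H : Set (MvPolynomial (Fin 2) ℂ)))) = 2 * r + 1 := by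
  set v : Fin (r + 1) → MvPolynomial (Fin 2) ℂ :=
    fun i => h * F ^ (r - (i : ℕ)) * G ^ (i : ℕ) with hv
  set w : Fin (2 * r + 1) → MvPolynomial (Fin 2) ℂ :=
    fun k => h ^ 2 * F ^ (2 * r - (k : ℕ)) * G ^ (k : ℕ) with hw
  have hmulinj : ∀ (q : MvPolynomial (Fin 2) ℂ), q ≠ 0 →
      LinearMap.ker (LinearMap.mulLeft ℂ q) = ⊥ := by
    intro q hq
    rw [LinearMap.ker_eq_bot]
    intro x y hxy
    exact mul_left_cancel₀ hq hxy
  have hliv : LinearIndependent ℂ v := by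
    have h1 := (aux_key_li r F G hind).map' (LinearMap.mulLeft ℂ h) (hmulinj h hh0)
    have heq : v = ⇑(LinearMap.mulLeft ℂ h) ∘ fun i : Fin (r + 1) => F ^ (r - (i : ℕ)) * G ^ (i : ℕ) := by
      funext i
      simp [hv, LinearMap.mulLeft_apply, mul_assoc]
    rw [heq]
    exact h1
  have hliw : LinearIndependent ℂ w := by
    have := (aux_key_li (2 * r) F G hind).map' (LinearMap.mulLeft ℂ (h ^ 2))
      (hmulinj (h ^ 2) (pow_ne_zero 2 hh0))
    have heq : w = ⇑(LinearMap.mulLeft ℂ (h ^ 2)) ∘ fun k : Fin (2 * r + 1) => F ^ (2 * r - (k : ℕ)) * G ^ (k : ℕ) := by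
      funext k
      simp [hw, LinearMap.mulLeft_apply, mul_assoc]
    rw [heq]
    exact this
  have hvij : ∀ (i j : ℕ), i ≤ r → j ≤ r →
      (h * F ^ (r - i) * G ^ i) * (h * F ^ (r - j) * G ^ j)
        = h ^ 2 * F ^ (2 * r - (i + j)) * G ^ (i + j) := by
    intro i j hi hj
    have he : (r - i) + (r - j) = 2 * r - (i + j) := by omega
    rw [← he, pow_add, pow_add, sq]
    ring
  constructor
  · rw [hHdef]
    have := finrank_span_eq_card (R := ℂ) hliv
    simpa using this
  · have hspan_eq : Submodule.span ℂ
        ((fun f => f ^ 2) '' (H : Set (MvPolynomial (Fin 2) ℂ)))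
        = Submodule.span ℂ (Set.range w) := by
      apply le_antisymm
      · rw [Submodule.span_le]
        rintro x ⟨f, hf, rfl⟩
        rw [hHdef, SetLike.mem_coe, Submodule.mem_span_range_iff_exists_fun] at hf
        obtain ⟨c, hc⟩ := hf
        have hfsq : f ^ 2 = ∑ i : Fin (r + 1), ∑ j : Fin (r + 1),
            (c i * c j) • (v i * v j) := by
          rw [sq, ← hc, Finset.sum_mul_sum]
          refine Finset.sum_congr rfl fun i _ => Finset.sum_congr rfl fun j _ => ?_
          rw [smul_mul_smul_comm]
        show f ^ 2 ∈ Submodule.span ℂ (Set.range w)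
        rw [hfsq]
        apply Submodule.sum_mem
        intro i _
        apply Submodule.sum_mem
        intro j _
        apply Submodule.smul_mem
        apply Submodule.subset_span
        refine ⟨⟨(i : ℕ) + (j : ℕ), by omega⟩, ?_⟩
        rw [hw, hv]
        exact (hvij i j (by omega) (by omega)).symm
      · rw [Submodule.span_le]
        rintro x ⟨k, rfl⟩
        have hk : (k : ℕ) < 2 * r + 1 := k.isLt
        have hmem : ∀ (m : ℕ), m ≤ r → h * F ^ (r - m) * G ^ m ∈ H := by
          intro m hm
          rw [hHdef]
          exact Submodule.subset_span ⟨⟨m, by omega⟩, rfl⟩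
        set i : ℕ := min (k : ℕ) r with hi
        set j : ℕ := (k : ℕ) - i with hj
        have hir : i ≤ r := by omega
        have hjr : j ≤ r := by omega
        have hijk : i + j = (k : ℕ) := by omega
        set x : MvPolynomial (Fin 2) ℂ := h * F ^ (r - i) * G ^ i with hx
        set y : MvPolynomial (Fin 2) ℂ := h * F ^ (r - j) * G ^ j with hy
        have hprod : x * y = w k := by
          rw [hx, hy, hvij i j hir hjr, hijk, hw]
        have hwk : w k = (2⁻¹ : ℂ) • ((x + y) ^ 2 - x ^ 2 - y ^ 2) := by
          have he : (x + y) ^ 2 - x ^ 2 - y ^ 2 = x * y + x * y := by ring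
          rw [← hprod, he, ← two_smul ℂ, smul_smul]
          norm_num
        have hxH : x ∈ H := hmem i hir
        have hyH : y ∈ H := hmem j hjr
        show w k ∈ Submodule.span ℂ ((fun f => f ^ 2) '' (H : Set (MvPolynomial (Fin 2) ℂ)))
        rw [hwk]
        apply Submodule.smul_mem
        apply Submodule.sub_mem
        apply Submodule.sub_mem
        · exact Submodule.subset_span ⟨x + y, Submodule.add_mem H hxH hyH, rfl⟩
        · exact Submodule.subset_span ⟨x, hxH, rfl⟩
        · exact Submodule.subset_span ⟨y, hyH, rfl⟩
    rw [hspan_eq]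
    have := finrank_span_eq_card (R := ℂ) hliw
    simpa using this
end

section
/- Let τ : X → Y be a d-sheeted topological covering of path-connected, locally path-connected spaces with monodromy group S_d, and let W → Y be the pullback covering given by the fiber product X ×_Y X with the diagonal removed. If W is connected, then the covering W → X has monodromy group S_{d−1}. -/
/-!
The fiber of `X ×_Y X ∖ Δ → X` over `x₀` is the fiber of `τ` through `x₀` with `x₀` removed.
Any permutation `σ` of it extends to a permutation of the whole fiber fixing `x₀`, which by full
monodromy of `τ` is realized by a loop `γ` at `τ x₀`. The lift of `γ` at `x₀` is a loop at `x₀`;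
pairing it with the lift of `γ` at another point `z` of the fiber gives a path in `X ×_Y X ∖ Δ`
(distinct lifts of one path never meet), lying over that loop and ending at `(x₀, σ z)`.
-/

/-- The (finite) covering `f : A → B` has full monodromy group over the basepoint `b`:
every permutation of the fiber `f ⁻¹ {b}` is realized by lifting some loop at `b`,
i.e. the image of `π₁(B, b)` in the symmetric group of the fiber is the whole
symmetric group. -/
def HasFullMonodromy {A B : Type} [TopologicalSpace A] [TopologicalSpace B]
    (f : A → B) (b : B) : Prop :=
  ∀ σ : Equiv.Perm (f ⁻¹' {b}), ∃ γ : Path b b,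
    ∀ x : f ⁻¹' {b}, ∃ p : Path (x : A) ((σ x : A)), ∀ t, f (p t) = γ t

theorem Nat.card_subtype_ne {α : Type*} (a : α) : Nat.card {x // x ≠ a} = Nat.card α - 1 := by
  classical
  cases finite_or_infinite α
  · have h := Nat.card_congr (Equiv.optionSubtypeNe a)
    rw [Finite.card_option] at h
    omega
  · have : Infinite {x // x ≠ a} :=
      not_finite_iff_infinite.mp fun _ => (Finite.of_equiv _ (Equiv.optionSubtypeNe a)).false
    simp [Nat.card_eq_zero_of_infinite]

section

variable {X Y : Type} (τ : X → Y)

def offDiagPullback : Set (X × X) := {w | τ w.1 = τ w.2 ∧ w.1 ≠ w.2}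

namespace offDiagPullback

def fiberEquiv (x₀ : X) :
    (fun w : offDiagPullback τ => w.1.1) ⁻¹' {x₀} ≃ {z : τ ⁻¹' {τ x₀} // z ≠ ⟨x₀, rfl⟩} where
  toFun w := ⟨⟨w.1.1.2, by obtain ⟨⟨_, h, -⟩, rfl⟩ := w; exact h.symm⟩,
    by obtain ⟨⟨_, -, h⟩, rfl⟩ := w; exact fun h' => h (congrArg Subtype.val h').symm⟩
  invFun z := ⟨⟨(x₀, z.1.1), z.1.2.symm, fun h => z.2 (Subtype.ext h.symm)⟩, rfl⟩
  left_inv := by rintro ⟨⟨⟨_, _⟩, _⟩, rfl⟩; rfl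
  right_inv z := rfl

theorem card_fiber_fst (x₀ : X) :
    Nat.card ((fun w : offDiagPullback τ => w.1.1) ⁻¹' {x₀}) = Nat.card (τ ⁻¹' {τ x₀}) - 1 := by
  rw [Nat.card_congr (fiberEquiv τ x₀), Nat.card_subtype_ne]

end offDiagPullback

end

section

variable {X Y : Type} [TopologicalSpace X] [TopologicalSpace Y] {τ : X → Y}

theorem IsCoveringMap.apply_ne_of_source_ne (hτ : IsCoveringMap τ) {a b a' b' : X}
    {p : Path a b} {q : Path a' b'} (hpq : ∀ t, τ (p t) = τ (q t)) (ha : a ≠ a')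
    (t : unitInterval) : p t ≠ q t := fun h => ha <| by
  simpa using congrFun (hτ.eq_of_comp_eq p.continuous q.continuous (funext hpq) t h) 0

def offDiagPullback.pathOfLifts (hτ : IsCoveringMap τ) {a b a' b' : X} (p : Path a b)
    (q : Path a' b') (hpq : ∀ t, τ (p t) = τ (q t)) (ha : (a, a') ∈ offDiagPullback τ)
    (hb : (b, b') ∈ offDiagPullback τ) :
    Path (⟨(a, a'), ha⟩ : offDiagPullback τ) ⟨(b, b'), hb⟩ where
  toFun t := ⟨(p t, q t), hpq t, hτ.apply_ne_of_source_ne hpq ha.2 t⟩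
  continuous_toFun := (p.continuous.prodMk q.continuous).subtype_mk _
  source' := by simp
  target' := by simp

theorem HasFullMonodromy.offDiagPullback_fst (hτ : IsCoveringMap τ) {x₀ : X}
    (hfull : HasFullMonodromy τ (τ x₀)) :
    HasFullMonodromy (fun w : offDiagPullback τ => w.1.1) x₀ := by
  classical
  intro σ
  let e := offDiagPullback.fiberEquiv τ x₀
  let a₀ : τ ⁻¹' {τ x₀} := ⟨x₀, rfl⟩
  let σ' : Equiv.Perm (τ ⁻¹' {τ x₀}) := Equiv.Perm.ofSubtype (e.permCongr σ)
  have hσ'a₀ : σ' a₀ = a₀ := Equiv.Perm.ofSubtype_apply_of_not_mem _ (not_not_intro rfl)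
  have hσ' (w) : σ' (e w) = e (σ w) := by
    simp only [σ', Equiv.Perm.ofSubtype_apply_coe, Equiv.permCongr_apply, Equiv.symm_apply_apply]
  obtain ⟨γ, hγ⟩ := hfull σ'
  obtain ⟨p₀, hp₀⟩ := hγ a₀
  let loop : Path x₀ x₀ := p₀.cast rfl (congrArg Subtype.val hσ'a₀).symm
  refine ⟨loop, fun w => ?_⟩
  obtain ⟨p, hp⟩ := hγ (e w)
  let p' : Path (e w : X) (e (σ w) : X) := p.cast rfl (congrArg Subtype.val (hσ' w).symm)
  let P := offDiagPullback.pathOfLifts hτ loop p' (fun t => (hp₀ t).trans (hp t).symm)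
    (e.symm (e w)).1.2 (e.symm (e (σ w))).1.2
  -- `e.symm (e w)` unfolds to `⟨(x₀, e w), _⟩`, the source of `P`
  exact ⟨P.cast (congrArg Subtype.val (e.symm_apply_apply w).symm)
    (congrArg Subtype.val (e.symm_apply_apply (σ w)).symm), fun _ => rfl⟩

end

theorem stmt_16_general (X Y : Type) [TopologicalSpace X] [TopologicalSpace Y]
    (τ : X → Y) (hτ : IsCoveringMap τ) (y : Y)
    (d : ℕ) (hd : Nat.card (τ ⁻¹' {y}) = d)
    (hfull : HasFullMonodromy τ y)
    (W : Set (X × X)) (hW : W = {w : X × X | τ w.1 = τ w.2 ∧ w.1 ≠ w.2})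
    (pr : W → X) (hpr : ∀ w : W, pr w = (w : X × X).1) :
    ∀ x₀ : X, τ x₀ = y →
      Nat.card (pr ⁻¹' {x₀}) = d - 1 ∧ HasFullMonodromy pr x₀ := by
  rintro x₀ rfl
  obtain rfl : W = offDiagPullback τ := hW
  obtain rfl : pr = fun w => w.1.1 := funext hpr
  exact ⟨hd ▸ offDiagPullback.card_fiber_fst τ x₀, hfull.offDiagPullback_fst hτ⟩

/-- Let `τ : X → Y` be a `d`-sheeted covering of path-connected, locally path-connected
spaces whose monodromy group is the full symmetric group `S_d`, and let `W → X` be the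
pullback covering `X ×_Y X` minus the diagonal (first projection).  If `W` is connected,
then the covering `W → X` has `(d-1)`-point fibers and monodromy group the full symmetric
group `S_{d-1}`. -/
theorem stmt_16 (X Y : Type) [TopologicalSpace X] [TopologicalSpace Y]
    [PathConnectedSpace X] [PathConnectedSpace Y]
    [LocallyPathConnectedSpace X] [LocallyPathConnectedSpace Y]
    (τ : X → Y) (hτ : IsCoveringMap τ) (y : Y)
    (d : ℕ) (hd : Nat.card (τ ⁻¹' {y}) = d) (hd2 : 2 ≤ d)
    (hfull : HasFullMonodromy τ y)
    (W : Set (X × X)) (hW : W = {w : X × X | τ w.1 = τ w.2 ∧ w.1 ≠ w.2})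
    (hconn : IsConnected W)
    (pr : W → X) (hpr : ∀ w : W, pr w = (w : X × X).1) :
    ∀ x₀ : X, τ x₀ = y →
      Nat.card (pr ⁻¹' {x₀}) = d - 1 ∧ HasFullMonodromy pr x₀ :=
  stmt_16_general X Y τ hτ y d hd hfull W hW pr hpr
end
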